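/- The Laplacian matrix of any weighted signed forest with c connected components has nullity exactly c. -/

import Mathlib

open scoped Classical
open Polynomial

namespace SGPaper

/-- A weighted signed graph on `n` vertices, given by its symmetric hollow
matrix of edge weights (a nonzero entry `w i j` is the weight of the edge `ij`;
positive edges have positive weight, negative edges negative weight). -/
structure WSG (n : ℕ) where
  w : Matrix (Fin n) (Fin n) ℝ
  symm : w.IsSymm
  loopless : ∀ i, w i i = 0

variable {n : ℕ}

/-- The underlying simple graph. -/
def WSG.graph (Γ : WSG n) : SimpleGraph (Fin n) :=
  SimpleGraph.fromRel (fun i j => Γ.w i j ≠ 0)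

/-- The spanning subgraph of positive edges. -/
def WSG.posGraph (Γ : WSG n) : SimpleGraph (Fin n) :=
  SimpleGraph.fromRel (fun i j => 0 < Γ.w i j)

/-- The spanning subgraph of negative edges. -/
def WSG.negGraph (Γ : WSG n) : SimpleGraph (Fin n) :=
  SimpleGraph.fromRel (fun i j => Γ.w i j < 0)

/-- Number of connected components of a graph. -/
noncomputable def comps {V : Type*} (G : SimpleGraph V) : ℕ :=
  Nat.card G.ConnectedComponent

/-- Weighted Laplacian `L = A - D`. -/
def WSG.lap (Γ : WSG n) : Matrix (Fin n) (Fin n) ℝ :=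
  Γ.w - Matrix.diagonal (fun i => ∑ j, Γ.w i j)

theorem WSG.lap_isHermitian (Γ : WSG n) : Γ.lap.IsHermitian := by
  have h : Γ.lap.IsSymm := Γ.symm.sub (Matrix.isSymm_diagonal _)
  show Γ.lap.conjTranspose = Γ.lap
  ext i j
  simpa [Matrix.conjTranspose_apply] using congrFun (congrFun h i) j

/-- Number of positive eigenvalues of the Laplacian. -/
noncomputable def WSG.nPos (Γ : WSG n) : ℕ :=
  (Finset.univ.filter fun i => 0 < Γ.lap_isHermitian.eigenvalues i).card

/-- Number of negative eigenvalues of the Laplacian. -/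
noncomputable def WSG.nNeg (Γ : WSG n) : ℕ :=
  (Finset.univ.filter fun i => Γ.lap_isHermitian.eigenvalues i < 0).card

/-- Multiplicity of `0` as an eigenvalue of the Laplacian. -/
noncomputable def WSG.nZero (Γ : WSG n) : ℕ :=
  (Finset.univ.filter fun i => Γ.lap_isHermitian.eigenvalues i = 0).card

/-- The Laplacian inertia `(n₊, n₋, n₀)`. -/
noncomputable def WSG.inertia (Γ : WSG n) : ℕ × ℕ × ℕ := (Γ.nPos, Γ.nNeg, Γ.nZero)

/-! Every edge `ij` of a forest is a bridge. Summing the equations `(L x)_k = 0` over the side `S`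
of `ij` containing `i`, the contributions of edges inside `S` cancel by symmetry of the weights,
and only `w i j * (x j - x i)` survives; since `w i j ≠ 0`, a kernel vector `x` is constant along
every edge. Hence the kernel of `L` consists of the vectors constant on connected components,
exactly as for the unweighted Laplacian, whose nullity is the number of components. -/

lemma _root_.SimpleGraph.eq_of_adj_of_reachable_of_not_reachable {V : Type*}
    {G : SimpleGraph V} {e : Sym2 V} {u v w : V} (hadj : G.Adj v w)
    (hv : (G.deleteEdges {e}).Reachable u v) (hw : ¬ (G.deleteEdges {e}).Reachable u w) :
    s(v, w) = e := by
  by_contra hne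
  exact hw (hv.trans (SimpleGraph.deleteEdges_adj.mpr ⟨hadj, hne⟩).reachable)

open Matrix

namespace WSG

variable (Γ : WSG n)

lemma graph_adj {i j : Fin n} : Γ.graph.Adj i j ↔ i ≠ j ∧ Γ.w i j ≠ 0 := by
  rw [WSG.graph, SimpleGraph.fromRel_adj, Γ.symm.apply j i, or_self]

lemma lap_mulVec_apply (x : Fin n → ℝ) (k : Fin n) :
    (Γ.lap *ᵥ x) k = ∑ l, Γ.w k l * (x l - x k) := by
  rw [WSG.lap, sub_mulVec, Pi.sub_apply, mulVec_diagonal]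
  simp only [mulVec, dotProduct, mul_sub, Finset.sum_sub_distrib, Finset.sum_mul]

lemma sum_lap_mulVec_eq_sum_compl (x : Fin n → ℝ) (S : Finset (Fin n)) :
    ∑ k ∈ S, (Γ.lap *ᵥ x) k = ∑ k ∈ S, ∑ l ∈ Sᶜ, Γ.w k l * (x l - x k) := by
  have hinner : ∑ k ∈ S, ∑ l ∈ S, Γ.w k l * (x l - x k) = 0 := by
    have hanti : ∑ k ∈ S, ∑ l ∈ S, Γ.w k l * (x l - x k)
        = -∑ k ∈ S, ∑ l ∈ S, Γ.w k l * (x l - x k) := by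
      conv_lhs => rw [Finset.sum_comm]
      simp only [← Finset.sum_neg_distrib]
      refine Finset.sum_congr rfl fun k _ => Finset.sum_congr rfl fun l _ => ?_
      rw [Γ.symm.apply k l]
      ring
    linarith
  simp only [lap_mulVec_apply, ← Finset.sum_add_sum_compl S, Finset.sum_add_distrib, hinner,
    zero_add]

variable {Γ}

lemma eq_of_lap_mulVec_eq_zero_of_adj (hforest : Γ.graph.IsAcyclic) {x : Fin n → ℝ}
    (hx : Γ.lap *ᵥ x = 0) {i j : Fin n} (hadj : Γ.graph.Adj i j) : x i = x j := by
  set G' := Γ.graph.deleteEdges {s(i, j)}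
  set S : Finset (Fin n) := {k | G'.Reachable i k}
  have hi : i ∈ S := by simp [S]
  have hj : j ∉ S := by
    simpa [S] using SimpleGraph.isBridge_iff.mp
      (SimpleGraph.isAcyclic_iff_forall_adj_isBridge.mp hforest hadj)
  have hcut : ∀ k ∈ S, ∀ l ∈ Sᶜ, Γ.w k l ≠ 0 → k = i ∧ l = j := by
    intro k hk l hl hw
    simp only [Finset.mem_compl, S, Finset.mem_filter, Finset.mem_univ, true_and] at hk hl
    have hkl : k ≠ l := by rintro rfl; exact hl hk
    rcases Sym2.eq_iff.mp (SimpleGraph.eq_of_adj_of_reachable_of_not_reachable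
      (Γ.graph_adj.mpr ⟨hkl, hw⟩) hk hl) with h | ⟨-, rfl⟩
    · exact h
    · exact absurd (SimpleGraph.Reachable.refl l) hl
  have hflux : ∑ k ∈ S, ∑ l ∈ Sᶜ, Γ.w k l * (x l - x k) = Γ.w i j * (x j - x i) := by
    rw [← Finset.sum_product', Finset.sum_eq_single_of_mem (i, j)
      (Finset.mem_product.mpr ⟨hi, Finset.mem_compl.mpr hj⟩)]
    rintro ⟨k, l⟩ hkl hne
    obtain ⟨hk, hl⟩ := Finset.mem_product.mp hkl
    by_cases hw : Γ.w k l = 0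
    · simp [hw]
    · obtain ⟨rfl, rfl⟩ := hcut k hk l hl hw
      exact absurd rfl hne
  have hzero : Γ.w i j * (x j - x i) = 0 := by
    rw [← hflux, ← Γ.sum_lap_mulVec_eq_sum_compl, hx]
    simp
  have hw : Γ.w i j ≠ 0 := (Γ.graph_adj.mp hadj).2
  exact (sub_eq_zero.mp ((mul_eq_zero.mp hzero).resolve_left hw)).symm

lemma lap_mulVec_eq_zero_iff_forall_adj (hforest : Γ.graph.IsAcyclic) {x : Fin n → ℝ} :
    Γ.lap *ᵥ x = 0 ↔ ∀ i j, Γ.graph.Adj i j → x i = x j := by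
  refine ⟨fun hx i j => eq_of_lap_mulVec_eq_zero_of_adj hforest hx, fun h => ?_⟩
  funext k
  rw [lap_mulVec_apply, Pi.zero_apply]
  refine Finset.sum_eq_zero fun l _ => ?_
  by_cases hkl : k = l
  · simp [hkl]
  by_cases hw : Γ.w k l = 0
  · simp [hw]
  · simp [h k l (Γ.graph_adj.mpr ⟨hkl, hw⟩)]

lemma ker_toLin'_lap_eq_ker_toLin'_lapMatrix (hforest : Γ.graph.IsAcyclic) :
    LinearMap.ker (Matrix.toLin' Γ.lap) = LinearMap.ker (Matrix.toLin' (Γ.graph.lapMatrix ℝ)) := by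
  ext x
  simp only [LinearMap.mem_ker, Matrix.toLin'_apply, lap_mulVec_eq_zero_iff_forall_adj hforest,
    SimpleGraph.lapMatrix_mulVec_eq_zero_iff_forall_adj]

end WSG

/-- The Laplacian matrix of a weighted signed forest with `c` connected
components has nullity exactly `c`. -/
theorem forest_nullity {n : ℕ} (Γ : WSG n) (hforest : Γ.graph.IsAcyclic) :
    Module.finrank ℝ (LinearMap.ker (Matrix.toLin' Γ.lap)) = comps Γ.graph := by
  rw [WSG.ker_toLin'_lap_eq_ker_toLin'_lapMatrix hforest,
    ← SimpleGraph.card_connectedComponent_eq_finrank_ker_toLin'_lapMatrix, comps,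
    Nat.card_eq_fintype_card]

end SGPaper
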